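/- Let γ ∈ (0,1) and let G⁽¹⁾, G⁽²⁾ ⊆ G_γ be disjoint. Then for every ψ ∈ ℋ(G⁽¹⁾): for every g ∈ G⁽²⁾ the family (U(g−h)·ψ_h)_{h∈G⁽¹⁾} is summable, and Σ_{g∈G⁽²⁾} ρ_g·|(π/ρ_g)·Σ_{h∈G⁽¹⁾} U(g−h)·ψ_h|² ≤ (π·C_U·(𝔖₀(α_U)−1)/(γ·ρ₀))²·‖ψ‖_{G⁽¹⁾}². -/

import Mathlib

noncomputable section

open scoped RealInnerProductSpace BigOperators
open Real

/-- `ℝ^d` with the Euclidean structure. -/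
abbrev V (d : ℕ) : Type := EuclideanSpace ℝ (Fin d)

/-- `Λ` is a full-rank lattice: the set of integer linear combinations of some
basis of `ℝ^d`. -/
def IsLattice {d : ℕ} (Λ : Set (V d)) : Prop :=
  ∃ b : Module.Basis (Fin d) ℝ (V d),
    Λ = {x : V d | ∃ c : Fin d → ℤ, x = ∑ i, (c i : ℝ) • b i}

/-- The vector `ν = (0,…,0,1)`. -/
def nu (d : ℕ) (hd : 0 < d) : V d :=
  EuclideanSpace.single ⟨d - 1, Nat.sub_lt hd Nat.one_pos⟩ (1 : ℝ)

/-- `ρ_g = (k₀+g)·ν`. -/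
def rho {d : ℕ} (k₀ ν g : V d) : ℝ := ⟪k₀ + g, ν⟫

/-- `σ_g = |k₀|² - |k₀+g|²`. -/
def sig {d : ℕ} (k₀ g : V d) : ℝ := ‖k₀‖ ^ 2 - ‖k₀ + g‖ ^ 2

/-- `G_γ = {g ∈ Λ : ρ_g ≥ γ·ρ₀}`. -/
def Gset {d : ℕ} (Λ : Set (V d)) (k₀ ν : V d) (γ : ℝ) : Set (V d) :=
  {g ∈ Λ | γ * ⟪k₀, ν⟫ ≤ rho k₀ ν g}

/-- `G^M = {g ∈ Λ : |g| ≤ M}`. -/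
def GMball {d : ℕ} (Λ : Set (V d)) (M : ℝ) : Set (V d) := {g ∈ Λ | ‖g‖ ≤ M}

/-- `𝔖_m(β) = Σ_{κ∈Λ} |κ|^m·exp(-β·|κ|)`. -/
def Sm {d : ℕ} (Λ : Set (V d)) (m : ℕ) (β : ℝ) : ℝ :=
  ∑' κ : Λ, ‖(κ : V d)‖ ^ m * Real.exp (-β * ‖(κ : V d)‖)

/-- The norm `‖φ‖_G` of `ℋ(G)`. -/
def normOn {d : ℕ} (k₀ ν : V d) (G : Set (V d)) (φ : V d → ℂ) : ℝ :=
  Real.sqrt (∑' g : G, rho k₀ ν (g : V d) * ‖φ (g : V d)‖ ^ 2)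

/-- The exponentially weighted norm `‖φ‖_α`. -/
def normA {d : ℕ} (k₀ ν : V d) (G : Set (V d)) (α : ℝ) (φ : V d → ℂ) : ℝ :=
  Real.sqrt (∑' g : G,
    Real.exp (2 * α * ‖(g : V d)‖) * rho k₀ ν (g : V d) * ‖φ (g : V d)‖ ^ 2)

/-- `φ|_G` is a member of `ℋ(G)`, i.e. `‖φ‖_G² < ∞`. -/
def MemH {d : ℕ} (k₀ ν : V d) (G : Set (V d)) (φ : V d → ℂ) : Prop :=
  Summable fun g : G => rho k₀ ν (g : V d) * ‖φ (g : V d)‖ ^ 2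

/-- The DHW equations on the beam set `G`:
`(ρ_g/π)·ψ_g′(z) = i(σ_g ψ_g(z) + Σ_{h∈G} U(g-h) ψ_h(z))` for `g ∈ G`,
including summability of the interaction sum. -/
def SatDHW {d : ℕ} (k₀ ν : V d) (U : V d → ℂ) (G : Set (V d)) (ψ : ℝ → V d → ℂ) : Prop :=
  ∀ z : ℝ, ∀ g ∈ G,
    Summable (fun h : G => U (g - (h : V d)) * ψ z (h : V d)) ∧
    HasDerivAt (fun w => ψ w g)
      (((π / rho k₀ ν g : ℝ) : ℂ) * (Complex.I *
        (((sig k₀ g : ℝ) : ℂ) * ψ z g +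
          ∑' h : G, U (g - (h : V d)) * ψ z (h : V d)))) z

/-- `z ↦ (w(g)·ψ_g(z))_{g∈G}` is a differentiable curve in `ℋ(G)`, encoded by
the weighted embedding `g ↦ w(g)·√ρ_g·ψ_g(z)` into `ℓ²(G)`. -/
def CurveDiff {d : ℕ} (k₀ ν : V d) (G : Set (V d)) (w : V d → ℝ) (ψ : ℝ → V d → ℂ) : Prop :=
  ∃ A : ℝ → lp (fun _ : G => ℂ) 2, Differentiable ℝ A ∧
    ∀ (z : ℝ) (g : G),
      A z g = ((w (g : V d) * Real.sqrt (rho k₀ ν (g : V d)) : ℝ) : ℂ) * ψ z (g : V d)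

/-- Tame strong solution of `DHW_G`. -/
def IsTameSol {d : ℕ} (k₀ ν : V d) (U : V d → ℂ) (G : Set (V d)) (ψ : ℝ → V d → ℂ) : Prop :=
  SatDHW k₀ ν U G ψ ∧ CurveDiff k₀ ν G (fun _ => 1) ψ ∧
  ∀ z : ℝ,
    Summable (fun g : G => |sig k₀ (g : V d)| * ‖ψ z (g : V d)‖ ^ 2) ∧
    Summable (fun q : G × G =>
      ‖U ((q.1 : V d) - (q.2 : V d))‖ * ‖ψ z (q.2 : V d)‖ * ‖ψ z (q.1 : V d)‖)

/-- `α`-tame strong solution of `DHW_G`. -/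
def IsAlphaTameSol {d : ℕ} (k₀ ν : V d) (U : V d → ℂ) (G : Set (V d)) (α : ℝ)
    (ψ : ℝ → V d → ℂ) : Prop :=
  SatDHW k₀ ν U G ψ ∧ CurveDiff k₀ ν G (fun _ => 1) ψ ∧
  CurveDiff k₀ ν G (fun g => Real.exp (α * ‖g‖)) ψ ∧
  ∀ z : ℝ,
    Summable (fun g : G =>
      Real.exp (2 * α * ‖(g : V d)‖) * |sig k₀ (g : V d)| * ‖ψ z (g : V d)‖ ^ 2) ∧
    Summable (fun q : G × G =>
      Real.exp (α * ‖(q.1 : V d)‖ + α * ‖(q.2 : V d)‖) *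
        ‖U ((q.1 : V d) - (q.2 : V d))‖ * ‖ψ z (q.2 : V d)‖ * ‖ψ z (q.1 : V d)‖)

open Classical in
/-- Initial condition `ψ(0) = δ` on `G`. -/
def InitDelta {d : ℕ} (G : Set (V d)) (ψ : ℝ → V d → ℂ) : Prop :=
  ∀ g ∈ G, ψ 0 g = if g = (0 : V d) then 1 else 0

/-!
Since `ρ ≥ γρ₀` on both beam sets, the weights `ρ` can be traded for the constant `γρ₀`,
which reduces the claim to the `ℓ²` boundedness of the kernel `‖U(g - h)‖` from `G⁽¹⁾` to
`G⁽²⁾`. By the Schur test its norm is at most the geometric mean of its largest row sum and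
its largest column sum, and both are at most `C_U·(𝔖₀(α_U) - 1)`: by disjointness `g - h`
runs injectively through the nonzero lattice points, where `exp (-α_U·|κ|)` sums to
`𝔖₀(α_U) - 1`.
-/

namespace IsLattice

variable {d : ℕ} {Λ : Set (V d)}

lemma exists_eq_span (hΛ : IsLattice Λ) :
    ∃ b : Module.Basis (Fin d) ℝ (V d), Λ = Submodule.span ℤ (Set.range b) := by
  obtain ⟨b, rfl⟩ := hΛ
  refine ⟨b, Set.ext fun x => ?_⟩
  simp only [Set.mem_ofPred_eq, SetLike.mem_coe, Submodule.mem_span_range_iff_exists_fun,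
    Int.cast_smul_eq_zsmul, eq_comm]

lemma zero_mem (hΛ : IsLattice Λ) : (0 : V d) ∈ Λ := by
  obtain ⟨b, rfl⟩ := hΛ.exists_eq_span
  exact zero_mem _

lemma sub_mem (hΛ : IsLattice Λ) {x y : V d} (hx : x ∈ Λ) (hy : y ∈ Λ) : x - y ∈ Λ := by
  obtain ⟨b, rfl⟩ := hΛ.exists_eq_span
  exact _root_.sub_mem hx hy

lemma summable_exp_neg_mul_norm (hΛ : IsLattice Λ) {β : ℝ} (hβ : 0 < β) :
    Summable fun κ : Λ => Real.exp (-β * ‖(κ : V d)‖) := by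
  obtain ⟨b, rfl⟩ := hΛ.exists_eq_span
  set L := Submodule.span ℤ (Set.range b)
  set n := Module.finrank ℤ L + 1
  refine Summable.of_norm_bounded_eventually ((ZLattice.summable_norm_pow_inv L n
    (Nat.lt_succ_self _)).mul_left (n.factorial / β ^ n)) ?_
  filter_upwards [(Set.finite_singleton (0 : L)).compl_mem_cofinite] with κ hκ
  have hκ : 0 < β * ‖κ‖ := mul_pos hβ (norm_pos_iff.mpr hκ)
  calc ‖Real.exp (-β * ‖(κ : V d)‖)‖ = (Real.exp (β * ‖κ‖))⁻¹ := by
        rw [Real.norm_of_nonneg (Real.exp_pos _).le, neg_mul, Real.exp_neg]; rfl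
    _ ≤ ((β * ‖κ‖) ^ n / n.factorial)⁻¹ :=
        inv_anti₀ (by positivity) (Real.pow_div_factorial_le_exp _ hκ.le n)
    _ = n.factorial / β ^ n * ‖κ‖⁻¹ ^ n := by
        rw [inv_div, mul_pow, inv_pow]; field_simp

lemma one_le_Sm_zero (hΛ : IsLattice Λ) {α : ℝ} (hα : 0 < α) : 1 ≤ Sm Λ 0 α := by
  simpa [Sm] using (hΛ.summable_exp_neg_mul_norm hα).le_tsum ⟨0, hΛ.zero_mem⟩
    fun κ _ => (Real.exp_pos _).le

lemma summable_and_tsum_le_of_le_exp_neg_mul_norm_sub (hΛ : IsLattice Λ) {α C : ℝ}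
    (hα : 0 < α) (hC : 0 ≤ C) {A : Set (V d)} (hA : A ⊆ Λ) {x : V d} (hx : x ∈ Λ)
    (hxA : x ∉ A) {f : A → ℝ} (hf0 : ∀ a, 0 ≤ f a)
    (hf : ∀ a, f a ≤ C * Real.exp (-α * ‖(a : V d) - x‖)) :
    Summable f ∧ ∑' a, f a ≤ C * (Sm Λ 0 α - 1) := by
  classical
  set E : Λ → ℝ := fun κ => Real.exp (-α * ‖(κ : V d)‖)
  have hE := hΛ.summable_exp_neg_mul_norm hα
  set o : Λ := ⟨0, hΛ.zero_mem⟩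
  set τ : A → Λ := fun a => ⟨a - x, hΛ.sub_mem (hA a.2) hx⟩
  have hτ : Function.Injective τ := fun a b h =>
    Subtype.ext (sub_left_inj.mp (congrArg Subtype.val h))
  have hτo : ∀ a, τ a ≠ o := fun a h =>
    hxA (sub_eq_zero.mp (congrArg Subtype.val h) ▸ a.2)
  set E₀ : Λ → ℝ := fun κ => if κ = o then 0 else E κ
  have hE₀ : ∀ κ, 0 ≤ E₀ κ ∧ E₀ κ ≤ E κ := fun κ => by
    simp only [E₀]; split_ifs <;> simp [E, Real.exp_nonneg]
  have hSm : Sm Λ 0 α - 1 = ∑' κ, E₀ κ := by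
    simp only [Sm, pow_zero, one_mul]
    rw [hE.tsum_eq_add_tsum_ite o]
    simp [E, o, E₀]
  have hEτ : Summable (E ∘ τ) := hE.comp_injective hτ
  have hfs : Summable f := .of_nonneg_of_le hf0 hf (hEτ.mul_left C)
  refine ⟨hfs, (hfs.tsum_le_tsum hf (hEτ.mul_left C)).trans ?_⟩
  rw [tsum_mul_left, hSm]
  have hE₀s : Summable E₀ := .of_nonneg_of_le (fun κ => (hE₀ κ).1) (fun κ => (hE₀ κ).2) hE
  exact mul_le_mul_of_nonneg_left (hEτ.tsum_le_tsum_of_inj τ hτ (fun κ _ => (hE₀ κ).1)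
    (fun a => (if_neg (hτo a)).ge) hE₀s) hC

lemma summable_and_tsum_norm_apply_sub_le (hΛ : IsLattice Λ) {E : Type*}
    [SeminormedAddGroup E] {U : V d → E} {α C : ℝ} (hα : 0 < α) (hC : 0 ≤ C)
    (hU : ∀ g ∈ Λ, ‖U g‖ ≤ C * Real.exp (-α * ‖g‖)) {A B : Set (V d)} (hA : A ⊆ Λ)
    (hB : B ⊆ Λ) (hAB : Disjoint A B) :
    (∀ g : B, Summable (fun h : A => ‖U (g - h)‖) ∧
      ∑' h : A, ‖U (g - h)‖ ≤ C * (Sm Λ 0 α - 1)) ∧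
    (∀ h : A, Summable (fun g : B => ‖U (g - h)‖) ∧
      ∑' g : B, ‖U (g - h)‖ ≤ C * (Sm Λ 0 α - 1)) := by
  have hUAB (g : B) (h : A) : ‖U (g - h)‖ ≤ C * Real.exp (-α * ‖(g : V d) - h‖) :=
    hU _ (hΛ.sub_mem (hB g.2) (hA h.2))
  refine ⟨fun g => ?_, fun h => ?_⟩
  · refine hΛ.summable_and_tsum_le_of_le_exp_neg_mul_norm_sub hα hC hA (hB g.2)
      (hAB.notMem_of_mem_right g.2) (fun _ => norm_nonneg _) fun h => ?_
    rw [norm_sub_rev]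
    exact hUAB g h
  · exact hΛ.summable_and_tsum_le_of_le_exp_neg_mul_norm_sub hα hC hB (hA h.2)
      (hAB.notMem_of_mem_left h.2) (fun _ => norm_nonneg _) fun g => hUAB g h

end IsLattice

lemma summable_and_tsum_sq_le_of_sq_le_mul {ι : Type*} {r f g : ι → ℝ} (hr : ∀ i, 0 ≤ r i)
    (hf : ∀ i, 0 ≤ f i) (hg : ∀ i, 0 ≤ g i) (hfs : Summable f) (hgs : Summable g)
    (hrfg : ∀ i, r i ^ 2 ≤ f i * g i) :
    Summable r ∧ (∑' i, r i) ^ 2 ≤ (∑' i, f i) * ∑' i, g i := by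
  have hrs : Summable r := .of_nonneg_of_le hr
    (fun i => by linarith [two_mul_le_add_of_sq_le_mul (hf i) (hg i) (hrfg i)])
    ((hfs.add hgs).mul_left (1 / 2))
  refine ⟨hrs, le_of_tendsto_of_tendsto' (hrs.hasSum.pow 2)
    (Filter.Tendsto.mul hfs.hasSum hgs.hasSum) fun s =>
      Finset.sum_sq_le_sum_mul_sum_of_sq_le_mul s (fun i _ => hf i) (fun i _ => hg i)
        fun i _ => hrfg i⟩

lemma schur_test {ι κ : Type*} {w : ι → κ → ℝ} {a : κ → ℝ} {K K' : ℝ}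
    (hw : ∀ i j, 0 ≤ w i j) (ha : ∀ j, 0 ≤ a j) (hK : 0 ≤ K)
    (hrow : ∀ i, Summable (w i)) (hrowK : ∀ i, ∑' j, w i j ≤ K)
    (hcol : ∀ j, Summable fun i => w i j) (hcolK : ∀ j, ∑' i, w i j ≤ K')
    (has : Summable fun j => a j ^ 2) :
    (∀ i, Summable fun j => w i j * a j) ∧
      Summable (fun i => (∑' j, w i j * a j) ^ 2) ∧
      ∑' i, (∑' j, w i j * a j) ^ 2 ≤ K * K' * ∑' j, a j ^ 2 := by
  have hF0 : ∀ i j, 0 ≤ w i j * a j ^ 2 := fun i j => mul_nonneg (hw i j) (sq_nonneg _)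
  have hcolF : ∀ j, ∑' i, w i j * a j ^ 2 ≤ K' * a j ^ 2 := fun j => by
    rw [tsum_mul_right]
    exact mul_le_mul_of_nonneg_right (hcolK j) (sq_nonneg _)
  have hFs : Summable fun p : κ × ι => w p.2 p.1 * a p.1 ^ 2 := by
    refine (summable_prod_of_nonneg fun p => hF0 p.2 p.1).mpr ⟨fun j => ?_, ?_⟩
    · exact (hcol j).mul_right (a j ^ 2)
    · exact .of_nonneg_of_le (fun j => tsum_nonneg fun i => hF0 i j) hcolF (has.mul_left K')
  have hrowF : ∀ i, Summable fun j => w i j * a j ^ 2 := hFs.prod_symm.prod_factor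
  have hCS : ∀ i, Summable (fun j => w i j * a j) ∧
      (∑' j, w i j * a j) ^ 2 ≤ (∑' j, w i j) * ∑' j, w i j * a j ^ 2 := fun i =>
    summable_and_tsum_sq_le_of_sq_le_mul (fun j => mul_nonneg (hw i j) (ha j)) (hw i)
      (hF0 i) (hrow i) (hrowF i) fun j => (by ring : (w i j * a j) ^ 2 = _).le
  have hbound : ∀ i, (∑' j, w i j * a j) ^ 2 ≤ K * ∑' j, w i j * a j ^ 2 := fun i =>
    (hCS i).2.trans (mul_le_mul_of_nonneg_right (hrowK i) (tsum_nonneg (hF0 i)))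
  have hsumF : Summable fun i => ∑' j, w i j * a j ^ 2 := hFs.prod_symm.prod
  have houter : Summable fun i => (∑' j, w i j * a j) ^ 2 :=
    .of_nonneg_of_le (fun i => sq_nonneg _) hbound (hsumF.mul_left K)
  refine ⟨fun i => (hCS i).1, houter, ?_⟩
  calc ∑' i, (∑' j, w i j * a j) ^ 2 ≤ ∑' i, K * ∑' j, w i j * a j ^ 2 :=
        houter.tsum_le_tsum hbound (hsumF.mul_left K)
    _ = K * ∑' j, ∑' i, w i j * a j ^ 2 := by
        rw [tsum_mul_left, hFs.prod_symm.tsum_comm' hrowF fun j => (hcol j).mul_right _]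
    _ ≤ K * ∑' j, K' * a j ^ 2 :=
        mul_le_mul_of_nonneg_left (hFs.prod.tsum_le_tsum hcolF (has.mul_left K')) hK
    _ = K * K' * ∑' j, a j ^ 2 := by rw [tsum_mul_left, mul_assoc]

lemma schur_test_norm {ι κ E : Type*} [NormedRing E] [CompleteSpace E] {W : ι → κ → E}
    {x : κ → E} {K K' : ℝ} (hK : 0 ≤ K)
    (hrow : ∀ i, Summable fun j => ‖W i j‖) (hrowK : ∀ i, ∑' j, ‖W i j‖ ≤ K)
    (hcol : ∀ j, Summable fun i => ‖W i j‖) (hcolK : ∀ j, ∑' i, ‖W i j‖ ≤ K')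
    (hx : Summable fun j => ‖x j‖ ^ 2) :
    (∀ i, Summable fun j => W i j * x j) ∧
      Summable (fun i => ‖∑' j, W i j * x j‖ ^ 2) ∧
      ∑' i, ‖∑' j, W i j * x j‖ ^ 2 ≤ K * K' * ∑' j, ‖x j‖ ^ 2 := by
  obtain ⟨hinner, houter, hbound⟩ := schur_test (fun i j => norm_nonneg (W i j))
    (fun j => norm_nonneg (x j)) hK hrow hrowK hcol hcolK hx
  have hnorm : ∀ i, Summable fun j => ‖W i j * x j‖ := fun i =>
    .of_nonneg_of_le (fun j => norm_nonneg _) (fun j => norm_mul_le _ _) (hinner i)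
  have hle : ∀ i, ‖∑' j, W i j * x j‖ ^ 2 ≤ (∑' j, ‖W i j‖ * ‖x j‖) ^ 2 := fun i =>
    pow_le_pow_left₀ (norm_nonneg _) ((norm_tsum_le_tsum_norm (hnorm i)).trans
      ((hnorm i).tsum_le_tsum (fun j => norm_mul_le _ _) (hinner i))) 2
  have houter' : Summable fun i => ‖∑' j, W i j * x j‖ ^ 2 :=
    .of_nonneg_of_le (fun i => sq_nonneg _) hle houter
  exact ⟨fun i => (hnorm i).of_norm, houter',
    (houter'.tsum_le_tsum hle houter).trans hbound⟩

lemma summable_and_tsum_le_div_of_mul_le {ι : Type*} {f g : ι → ℝ} {c : ℝ} (hc : 0 < c)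
    (hf : ∀ i, 0 ≤ f i) (hfg : ∀ i, c * f i ≤ g i) (hg : Summable g) :
    Summable f ∧ ∑' i, f i ≤ (∑' i, g i) / c := by
  have hle : ∀ i, f i ≤ g i / c := fun i => by rw [le_div_iff₀' hc]; exact hfg i
  have hfs : Summable f := .of_nonneg_of_le hf hle (hg.div_const c)
  refine ⟨hfs, ?_⟩
  rw [← tsum_div_const]
  exact hfs.tsum_le_tsum hle (hg.div_const c)

lemma mul_norm_ofReal_div_mul_sq_le {c ρ : ℝ} (hc : 0 < c) (hcρ : c ≤ ρ) (p : ℝ) (z : ℂ) :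
    ρ * ‖((p / ρ : ℝ) : ℂ) * z‖ ^ 2 ≤ p ^ 2 / c * ‖z‖ ^ 2 := by
  have hρ : 0 < ρ := hc.trans_le hcρ
  calc ρ * ‖((p / ρ : ℝ) : ℂ) * z‖ ^ 2 = p ^ 2 / ρ * ‖z‖ ^ 2 := by
        rw [norm_mul, Complex.norm_real, Real.norm_eq_abs, mul_pow, sq_abs]
        field_simp
    _ ≤ p ^ 2 / c * ‖z‖ ^ 2 := by gcongr

/-- bound on the coupling operator between disjoint beam sets:
for disjoint `G⁽¹⁾, G⁽²⁾ ⊆ G_γ` and `ψ ∈ ℋ(G⁽¹⁾)`, the coupling sums are well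
defined and
`Σ_{g∈G⁽²⁾} ρ_g·|(π/ρ_g)·Σ_{h∈G⁽¹⁾} U(g-h)ψ_h|²
  ≤ (π·C_U·(𝔖₀(α_U)-1)/(γ·ρ₀))²·‖ψ‖_{G⁽¹⁾}²`. -/
theorem stmt17 {d : ℕ} (hd : 0 < d) (Λ : Set (V d)) (hΛ : IsLattice Λ)
    (k₀ : V d) (hk : 0 < ⟪k₀, nu d hd⟫)
    (U : V d → ℂ)
    (CU αU : ℝ) (hCU : 0 < CU) (hαU : 0 < αU)
    (hUbd : ∀ g ∈ Λ, ‖U g‖ ≤ CU * Real.exp (-αU * ‖g‖))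
    (γ : ℝ) (hγ : γ ∈ Set.Ioo (0 : ℝ) 1)
    (G₁ G₂ : Set (V d))
    (hG₁ : G₁ ⊆ Gset Λ k₀ (nu d hd) γ) (hG₂ : G₂ ⊆ Gset Λ k₀ (nu d hd) γ)
    (hdisj : Disjoint G₁ G₂) :
    ∀ ψ : V d → ℂ,
      (Summable fun h : G₁ => rho k₀ (nu d hd) (h : V d) * ‖ψ (h : V d)‖ ^ 2) →
      (∀ g : G₂, Summable fun h : G₁ => U ((g : V d) - (h : V d)) * ψ (h : V d)) ∧
      (∑' g : G₂, rho k₀ (nu d hd) (g : V d) *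
          ‖((π / rho k₀ (nu d hd) (g : V d) : ℝ) : ℂ) *
            ∑' h : G₁, U ((g : V d) - (h : V d)) * ψ (h : V d)‖ ^ 2) ≤
        (π * CU * (Sm Λ 0 αU - 1) / (γ * ⟪k₀, nu d hd⟫)) ^ 2 *
          ∑' h : G₁, rho k₀ (nu d hd) (h : V d) * ‖ψ (h : V d)‖ ^ 2 := by
  intro ψ hψ
  set ν := nu d hd
  set c := γ * ⟪k₀, ν⟫
  have hc : 0 < c := mul_pos hγ.1 hk
  set K := CU * (Sm Λ 0 αU - 1)
  have hK : 0 ≤ K := mul_nonneg hCU.le (sub_nonneg.mpr (hΛ.one_le_Sm_zero hαU))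
  obtain ⟨hrow, hcol⟩ := hΛ.summable_and_tsum_norm_apply_sub_le hαU hCU.le hUbd
    (fun h hh => (hG₁ hh).1) (fun g hg => (hG₂ hg).1) hdisj
  obtain ⟨hψs, hψle⟩ := summable_and_tsum_le_div_of_mul_le (f := fun h : G₁ => ‖ψ h‖ ^ 2) hc
    (fun _ => sq_nonneg _) (fun h => mul_le_mul_of_nonneg_right (hG₁ h.2).2 (sq_nonneg _)) hψ
  obtain ⟨hinner, houter, hschur⟩ := schur_test_norm hK (fun g => (hrow g).1)
    (fun g => (hrow g).2) (fun h => (hcol h).1) (fun h => (hcol h).2) hψs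
  have hterm (g : G₂) :=
    mul_norm_ofReal_div_mul_sq_le hc (hG₂ g.2).2 π (∑' h : G₁, U (g - h) * ψ h)
  have hsum : Summable fun g : G₂ =>
      rho k₀ ν g * ‖((π / rho k₀ ν g : ℝ) : ℂ) * ∑' h : G₁, U (g - h) * ψ h‖ ^ 2 :=
    .of_nonneg_of_le (fun g => mul_nonneg (hc.le.trans (hG₂ g.2).2) (sq_nonneg _)) hterm
      (houter.mul_left _)
  refine ⟨hinner, ?_⟩
  calc _ ≤ ∑' g : G₂, π ^ 2 / c * ‖∑' h : G₁, U (g - h) * ψ h‖ ^ 2 :=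
        hsum.tsum_le_tsum hterm (houter.mul_left _)
    _ ≤ π ^ 2 / c * (K * K * ((∑' h : G₁, rho k₀ ν h * ‖ψ h‖ ^ 2) / c)) := by
        rw [tsum_mul_left]
        gcongr
        exact hschur.trans (by gcongr)
    _ = _ := by simp only [K]; field_simp
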